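/- A permutation w avoids the pattern 132 (i.e., there is no triple i < j < k with w(i) < w(k) < w(j)) if and only if r_w(i,j) = 0 for every cell (i,j) of the Rothe diagram D(w). -/

import Mathlib

/-!
If a cell `(i, j)` of the Rothe diagram has positive rank, witnessed by `k ≤ i` with `w k ≤ j`,
then in fact `k < i < w⁻¹ j` and `w k < j < w i`, a 132 pattern. Conversely a 132 pattern
`i < j < k` puts `(j, w k)` in the diagram, with `i` counted by its rank.
-/

open Finset

/-- The Rothe diagram of a permutation (0-based coordinates). -/
def Rothe {n : ℕ} (w : Equiv.Perm (Fin n)) : Finset (Fin n × Fin n) :=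
  Finset.univ.filter (fun p => p.2 < w p.1 ∧ p.1 < w⁻¹ p.2)

/-- The rank function r_w(i,j) = #{k : k ≤ i and w(k) ≤ j}. -/
def rk {n : ℕ} (w : Equiv.Perm (Fin n)) (i j : Fin n) : ℕ :=
  (Finset.univ.filter (fun k => k ≤ i ∧ w k ≤ j)).card

/-- m_i(w) = #{j : j > i and w(j) < w(i)}. -/
def mrow {n : ℕ} (w : Equiv.Perm (Fin n)) (i : Fin n) : ℕ :=
  (Finset.univ.filter (fun j => i < j ∧ w j < w i)).card

/-- The set of 132-patterns of w. -/
def P132 {n : ℕ} (w : Equiv.Perm (Fin n)) : Finset (Fin n × Fin n × Fin n) :=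
  Finset.univ.filter
    (fun t => t.1 < t.2.1 ∧ t.2.1 < t.2.2 ∧ w t.1 < w t.2.2 ∧ w t.2.2 < w t.2.1)

section Rothe

variable {n : ℕ} {w : Equiv.Perm (Fin n)}

theorem mem_Rothe {i j : Fin n} : (i, j) ∈ Rothe w ↔ j < w i ∧ i < w⁻¹ j := by
  simp [Rothe]

theorem rk_eq_zero_iff {i j : Fin n} : rk w i j = 0 ↔ ∀ k ≤ i, j < w k := by
  simp [rk, Finset.filter_eq_empty_iff]

theorem mk_mem_Rothe_of_lt_of_lt {j k : Fin n} (hjk : j < k) (hw : w k < w j) :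
    (j, w k) ∈ Rothe w :=
  mem_Rothe.2 ⟨hw, by simpa using hjk⟩

theorem lt_and_lt_of_mem_Rothe {i j k : Fin n} (hp : (i, j) ∈ Rothe w) (hki : k ≤ i)
    (hkj : w k ≤ j) : k < i ∧ w k < j := by
  obtain ⟨hj, hi⟩ := mem_Rothe.1 hp
  have hk_ne_i : k ≠ i := by rintro rfl; exact hkj.not_gt hj
  have hk_ne_col : w k ≠ j := by rintro rfl; simp at hi; exact hki.not_gt hi
  exact ⟨lt_of_le_of_ne hki hk_ne_i, lt_of_le_of_ne hkj hk_ne_col⟩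

end Rothe

/-- w avoids 132 iff r_w vanishes on the Rothe diagram. -/
theorem stmt11 {n : ℕ} (w : Equiv.Perm (Fin n)) :
    (∀ i j k : Fin n, i < j → j < k → w i < w k → ¬ w k < w j) ↔
      ∀ p ∈ Rothe w, rk w p.1 p.2 = 0 := by
  constructor
  · rintro h ⟨i, j⟩ hp
    obtain ⟨hj, hi⟩ := mem_Rothe.1 hp
    refine rk_eq_zero_iff.2 fun k hki => lt_of_not_ge fun hkj => ?_
    obtain ⟨hk, hwk⟩ := lt_and_lt_of_mem_Rothe hp hki hkj
    exact h k i (w⁻¹ j) hk hi (by simpa using hwk) (by simpa using hj)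
  · intro h i j k hij hjk hik hkj
    have hwi := rk_eq_zero_iff.1 (h _ (mk_mem_Rothe_of_lt_of_lt hjk hkj)) i hij.le
    exact hik.not_gt hwi
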